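/- Let a, b ≥ 1 and let T_2(a,b) be the double star: two adjacent spine vertices, with a pendant leaves attached to the first and b pendant leaves attached to the second. Then λ_max(R_{T_2(a,b)}) < 0 if and only if (a−1)(b−1) < 4, and λ_max(R_{T_2(a,b)}) = 0 if and only if (a−1)(b−1) = 4. -/

import Mathlib

open Finset Matrix

/-- The Ricci matrix of a graph, indexed by edges: diagonal entry `-(1/d_x + 1/d_y)`
for an edge `{x,y}`, entry `1/d_z` for distinct edges sharing the vertex `z`, and `0`
for disjoint edges.  Here the degree of `v` is `(G.neighborSet v).ncard`. -/
noncomputable def ricciMatrix {V : Type*} (G : SimpleGraph V) [Fintype V] [DecidableEq V] :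
    Matrix G.edgeSet G.edgeSet ℝ := fun e f =>
  if (e : Sym2 V) = (f : Sym2 V) then
    -∑ v : V, if v ∈ (e : Sym2 V) then 1 / ((G.neighborSet v).ncard : ℝ) else 0
  else
    ∑ v : V, if v ∈ (e : Sym2 V) ∧ v ∈ (f : Sym2 V) then 1 / ((G.neighborSet v).ncard : ℝ) else 0

/-- The largest eigenvalue of a real matrix. -/
noncomputable def lambdaMax {n : Type*} [Fintype n] (M : Matrix n n ℝ) : ℝ :=
  sSup {t : ℝ | ∃ w : n → ℝ, w ≠ 0 ∧ M.mulVec w = t • w}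

/-- The caterpillar `T_m(a)`: a spine path `v_0 — v_1 — ⋯ — v_{m-1}` (the `Sum.inl`
vertices) together with `a i` pendant leaves attached to the spine vertex `v i`
(the `Sum.inr ⟨i, _⟩` vertices). -/
def caterpillar (m : ℕ) (a : Fin m → ℕ) :
    SimpleGraph (Fin m ⊕ (Σ i : Fin m, Fin (a i))) where
  Adj x y := match x, y with
    | .inl i, .inl j => i.val + 1 = j.val ∨ j.val + 1 = i.val
    | .inl i, .inr t => i = t.1
    | .inr t, .inl i => i = t.1
    | .inr _, .inr _ => False
  symm := by
    constructor
    rintro (i | t) (j | s) h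
    · exact Or.symm h
    · exact h
    · exact h
    · exact h
  loopless := by
    constructor
    rintro (i | t) h
    · omega
    · exact h

instance (m : ℕ) (a : Fin m → ℕ) : DecidableRel (caterpillar m a).Adj := fun x y =>
  match x, y with
  | .inl _, .inl _ => inferInstanceAs (Decidable (_ ∨ _))
  | .inl i, .inr t => inferInstanceAs (Decidable (i = t.1))
  | .inr t, .inl i => inferInstanceAs (Decidable (i = t.1))
  | .inr _, .inr _ => isFalse id

/-
The Ricci quadratic form of any graph is `∑_v ((∑_{e ∋ v} w_e)² - 2 ∑_{e ∋ v} w_e²) / d_v`.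
On the double star, with weight `s` on the spine edge, each spine vertex with `A` leaves
contributes, together with its leaves, `((s + X)² - 2(s² + S)) / (A + 1) - S`, where `X` and `S`
are the sum and the sum of squares of its leaf weights. Cauchy–Schwarz (`X² ≤ A S`) and completing
the square bound this by `s² (A - 3) / (3(A + 1))`, so the whole form is at most `s² (2 - 4c) / 3`
with `c = 1/(a+1) + 1/(b+1)`, and it is negative on nonzero vectors with `s = 0`. The vector
equal to `3` on the spine and `1` on the leaves attains the bound, hence `λ_max < 0 ↔ c > 1/2` and
`λ_max ≤ 0 ↔ c ≥ 1/2`. Finally `c - 1/2 = (4 - (a-1)(b-1)) / (2(a+1)(b+1))`.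
-/

section Spectrum

variable {n : Type*} [Fintype n] [DecidableEq n] {M : Matrix n n ℝ}

theorem lambdaMax_eq_sSup_spectrum (M : Matrix n n ℝ) : lambdaMax M = sSup (spectrum ℝ M) := by
  rw [lambdaMax]
  congr 1
  ext t
  rw [← spectrum_toLin', ← Module.End.hasEigenvalue_iff_mem_spectrum]
  simp only [Module.End.hasEigenvalue_iff, Submodule.ne_bot_iff, Module.End.mem_eigenspace_iff,
    toLin'_apply]
  exact exists_congr fun w => and_comm

theorem Matrix.IsHermitian.posDef_iff_spectrum_pos (hM : M.IsHermitian) :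
    M.PosDef ↔ ∀ t ∈ spectrum ℝ M, 0 < t := by
  simp [hM.posDef_iff_eigenvalues_pos, hM.spectrum_real_eq_range_eigenvalues]

theorem Matrix.IsHermitian.lambdaMax_nonpos_iff (hM : M.IsHermitian) :
    lambdaMax M ≤ 0 ↔ ∀ w, w ⬝ᵥ (M *ᵥ w) ≤ 0 := by
  calc lambdaMax M ≤ 0 ↔ ∀ t ∈ spectrum ℝ M, t ≤ 0 := by
        rw [lambdaMax_eq_sSup_spectrum]
        exact ⟨fun h t ht => (le_csSup M.finite_real_spectrum.bddAbove ht).trans h,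
          Real.sSup_nonpos⟩
    _ ↔ (-M).PosSemidef := by
        rw [posSemidef_iff_isHermitian_and_spectrum_nonneg, and_iff_right hM.neg,
          ← spectrum.neg_eq]
        simp [Set.subset_def]
    _ ↔ ∀ w, w ⬝ᵥ (M *ᵥ w) ≤ 0 := by
        rw [posSemidef_iff_dotProduct_mulVec, and_iff_right hM.neg]
        simp [neg_mulVec]

theorem Matrix.IsHermitian.lambdaMax_neg_iff (hM : M.IsHermitian) [Nonempty n] :
    lambdaMax M < 0 ↔ ∀ w, w ≠ 0 → w ⬝ᵥ (M *ᵥ w) < 0 := by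
  have hne : (spectrum ℝ M).Nonempty :=
    ⟨_, hM.eigenvalues_mem_spectrum_real (Classical.arbitrary n)⟩
  calc lambdaMax M < 0 ↔ ∀ t ∈ spectrum ℝ M, t < 0 := by
        rw [lambdaMax_eq_sSup_spectrum, M.finite_real_spectrum.csSup_lt_iff hne]
    _ ↔ (-M).PosDef := by
        rw [hM.neg.posDef_iff_spectrum_pos, ← spectrum.neg_eq]
        simp
    _ ↔ ∀ w, w ≠ 0 → w ⬝ᵥ (M *ᵥ w) < 0 := by
        rw [posDef_iff_dotProduct_mulVec, and_iff_right hM.neg]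
        simp [neg_mulVec]

end Spectrum

section Ricci

variable {V : Type*} [Fintype V] [DecidableEq V] (G : SimpleGraph V)

theorem ricciMatrix_apply_eq_sum (e f : G.edgeSet) :
    ricciMatrix G e f = ∑ v, ((if v ∈ e.1 ∧ v ∈ f.1 then 1 else 0)
      - if e = f ∧ v ∈ e.1 then 2 else 0) / ((G.neighborSet v).ncard : ℝ) := by
  unfold ricciMatrix
  by_cases hef : e = f
  · subst hef
    simp only [if_true, and_self, true_and, ← Finset.sum_neg_distrib]
    refine Finset.sum_congr rfl fun v _ => ?_
    split_ifs <;> ring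
  · rw [if_neg (Subtype.coe_injective.ne hef)]
    simp [hef, div_eq_mul_inv]

theorem isHermitian_ricciMatrix : (ricciMatrix G).IsHermitian :=
  IsHermitian.ext fun e f => by
    rw [star_trivial, ricciMatrix_apply_eq_sum, ricciMatrix_apply_eq_sum]
    by_cases hef : e = f
    · rw [hef]
    · simp only [hef, Ne.symm hef, false_and, if_false]
      exact Finset.sum_congr rfl fun v _ => by rw [if_congr and_comm rfl rfl]

theorem dotProduct_ricciMatrix_mulVec [Fintype G.edgeSet] (w : G.edgeSet → ℝ) :
    w ⬝ᵥ (ricciMatrix G *ᵥ w) = ∑ v, ((∑ e : G.edgeSet with v ∈ e.1, w e) ^ 2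
      - 2 * ∑ e : G.edgeSet with v ∈ e.1, w e ^ 2) / ((G.neighborSet v).ncard : ℝ) := by
  calc w ⬝ᵥ (ricciMatrix G *ᵥ w)
      = ∑ e : G.edgeSet, ∑ f : G.edgeSet, ∑ v : V, w e * w f *
          (((if v ∈ e.1 ∧ v ∈ f.1 then 1 else 0) - if e = f ∧ v ∈ e.1 then 2 else 0) /
            ((G.neighborSet v).ncard : ℝ)) := by
        simp only [dotProduct, mulVec, ricciMatrix_apply_eq_sum, Finset.mul_sum, Finset.sum_mul]
        refine Finset.sum_congr rfl fun e _ => Finset.sum_congr rfl fun f _ =>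
          Finset.sum_congr rfl fun v _ => by ring
    _ = ∑ v : V, ∑ e : G.edgeSet, ∑ f : G.edgeSet, w e * w f *
          (((if v ∈ e.1 ∧ v ∈ f.1 then 1 else 0) - if e = f ∧ v ∈ e.1 then 2 else 0) /
            ((G.neighborSet v).ncard : ℝ)) :=
        (Finset.sum_congr rfl fun _ _ => Finset.sum_comm).trans Finset.sum_comm
    _ = _ := by
        refine Finset.sum_congr rfl fun v _ => ?_
        have hsq : (∑ e : G.edgeSet with v ∈ e.1, w e) ^ 2
            = ∑ e, ∑ f, if v ∈ e.1 ∧ v ∈ f.1 then w e * w f else 0 := by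
          simp only [sq, Finset.sum_filter, Finset.sum_mul_sum, ite_zero_mul_ite_zero]
        have hdiag : ∑ e : G.edgeSet with v ∈ e.1, w e ^ 2
            = ∑ e, ∑ f, if e = f ∧ v ∈ e.1 then w e * w f else 0 := by
          simp only [Finset.sum_filter, ite_and, Finset.sum_ite_eq, Finset.mem_univ, if_true, sq]
        rw [hsq, hdiag, Finset.mul_sum, ← Finset.sum_sub_distrib, Finset.sum_div]
        refine Finset.sum_congr rfl fun e _ => ?_
        rw [Finset.mul_sum, ← Finset.sum_sub_distrib, Finset.sum_div]
        refine Finset.sum_congr rfl fun f _ => ?_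
        split_ifs <;> ring

end Ricci

namespace caterpillar

variable {m : ℕ} {a : Fin m → ℕ} {i j : Fin m} {t t' : Σ i, Fin (a i)}

@[simp] theorem adj_inl_inl :
    (caterpillar m a).Adj (.inl i) (.inl j) ↔ i.val + 1 = j.val ∨ j.val + 1 = i.val := Iff.rfl

@[simp] theorem adj_inl_inr : (caterpillar m a).Adj (.inl i) (.inr t) ↔ i = t.1 := Iff.rfl

@[simp] theorem adj_inr_inl : (caterpillar m a).Adj (.inr t) (.inl i) ↔ i = t.1 := Iff.rfl

@[simp] theorem not_adj_inr_inr : ¬ (caterpillar m a).Adj (.inr t) (.inr t') := id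

def leafEdge (t : Σ i, Fin (a i)) : (caterpillar m a).edgeSet :=
  ⟨s(.inl t.1, .inr t), rfl⟩

theorem leafEdge_injective : Function.Injective (leafEdge (m := m) (a := a)) := by
  intro t t' h
  have := congrArg Subtype.val h
  simp only [leafEdge, Sym2.eq_iff, Sum.inl.injEq, Sum.inr.injEq, reduceCtorEq, and_false,
    or_false] at this
  exact this.2

theorem neighborSet_inr (t : Σ i, Fin (a i)) :
    (caterpillar m a).neighborSet (.inr t) = {.inl t.1} := by
  ext (j | s) <;> simp [eq_comm]

theorem ncard_neighborSet_inr (t : Σ i, Fin (a i)) :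
    ((caterpillar m a).neighborSet (.inr t)).ncard = 1 := by
  rw [neighborSet_inr, Set.ncard_singleton]

end caterpillar

namespace doubleStar

open caterpillar

variable {a : Fin 2 → ℕ}

def spineEdge : (caterpillar 2 a).edgeSet := ⟨s(.inl 0, .inl 1), Or.inl rfl⟩

theorem neighborSet_inl (i : Fin 2) : (caterpillar 2 a).neighborSet (.inl i) =
    insert (.inl i.rev) (Set.range fun k : Fin (a i) => .inr ⟨i, k⟩) := by
  ext (j | ⟨j, k⟩)
  · simp only [SimpleGraph.mem_neighborSet, adj_inl_inl, Set.mem_insert_iff, Sum.inl.injEq,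
      Fin.ext_iff, Fin.val_rev, Set.mem_range, reduceCtorEq, exists_false, or_false]
    omega
  · simp only [SimpleGraph.mem_neighborSet, adj_inl_inr, Set.mem_insert_iff, reduceCtorEq,
      false_or, Set.mem_range, Sum.inr.injEq, Sigma.mk.inj_iff]
    exact ⟨fun h => ⟨h ▸ k, h, by subst h; rfl⟩, fun ⟨_, h, _⟩ => h⟩

theorem ncard_neighborSet_inl (i : Fin 2) :
    ((caterpillar 2 a).neighborSet (.inl i)).ncard = a i + 1 := by
  rw [neighborSet_inl, Set.ncard_insert_of_notMem (by simp),
    Set.ncard_range_of_injective (fun k k' h => by simpa using h), Nat.card_eq_fintype_card,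
    Fintype.card_fin]

theorem edge_eq_spineEdge_or_leafEdge (e : (caterpillar 2 a).edgeSet) :
    e = spineEdge ∨ ∃ t, e = leafEdge t := by
  obtain ⟨e, he⟩ := e
  induction e using Sym2.ind with
  | h x y =>
    rcases x with i | t <;> rcases y with j | t'
    · have : (i = 0 ∧ j = 1) ∨ (i = 1 ∧ j = 0) := by
        simp only [SimpleGraph.mem_edgeSet, adj_inl_inl] at he
        omega
      rcases this with ⟨rfl, rfl⟩ | ⟨rfl, rfl⟩
      exacts [Or.inl rfl, Or.inl (Subtype.ext Sym2.eq_swap)]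
    · obtain rfl : i = t'.1 := he
      exact Or.inr ⟨t', rfl⟩
    · obtain rfl : j = t.1 := he
      exact Or.inr ⟨t, Subtype.ext Sym2.eq_swap⟩
    · exact he.elim

theorem bijective_elim_spineEdge_leafEdge :
    Function.Bijective (Option.elim' spineEdge leafEdge : Option (Σ i, Fin (a i)) → _) := by
  refine ⟨?_, fun e => ?_⟩
  · rintro (_ | t) (_ | t') h
    · rfl
    · simp [spineEdge, leafEdge, Subtype.ext_iff] at h
    · simp [spineEdge, leafEdge, Subtype.ext_iff] at h
    · exact congrArg some (leafEdge_injective h)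
  · rcases edge_eq_spineEdge_or_leafEdge e with rfl | ⟨t, rfl⟩
    exacts [⟨none, rfl⟩, ⟨some t, rfl⟩]

theorem sum_edgeSet {M : Type*} [AddCommMonoid M] (g : (caterpillar 2 a).edgeSet → M) :
    ∑ e, g e = g spineEdge + ∑ t, g (leafEdge t) := by
  rw [← bijective_elim_spineEdge_leafEdge.sum_comp, Fintype.sum_option]
  rfl

theorem sum_incident_inl {M : Type*} [AddCommMonoid M] (i : Fin 2)
    (g : (caterpillar 2 a).edgeSet → M) :
    ∑ e : (caterpillar 2 a).edgeSet with .inl i ∈ e.1, g e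
      = g spineEdge + ∑ k, g (leafEdge ⟨i, k⟩) := by
  rw [Finset.sum_filter, sum_edgeSet, Fintype.sum_sigma]
  simp [spineEdge, leafEdge, show i = 0 ∨ i = 1 by omega]

theorem sum_incident_inr {M : Type*} [AddCommMonoid M] (t : Σ i, Fin (a i))
    (g : (caterpillar 2 a).edgeSet → M) :
    ∑ e : (caterpillar 2 a).edgeSet with .inr t ∈ e.1, g e = g (leafEdge t) := by
  rw [Finset.sum_filter, sum_edgeSet]
  simp [spineEdge, leafEdge]

section StarForm

noncomputable def starForm (A s X S : ℝ) : ℝ := ((s + X) ^ 2 - 2 * (s ^ 2 + S)) / (A + 1) - S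

variable {A s X S : ℝ}

theorem starForm_le (hA : 0 < A) (hX : X ^ 2 ≤ A * S) :
    starForm A s X S ≤ s ^ 2 * (A - 3) / (3 * (A + 1)) := by
  have hsos : s ^ 2 * (A - 3) / (3 * (A + 1)) - starForm A s X S
      = ((A + 3) * (A * S - X ^ 2) + (3 * X - A * s) ^ 2 / 3) / (A * (A + 1)) := by
    unfold starForm
    field_simp
    ring
  have : 0 ≤ ((A + 3) * (A * S - X ^ 2) + (3 * X - A * s) ^ 2 / 3) / (A * (A + 1)) :=
    div_nonneg (add_nonneg (mul_nonneg (by linarith) (by linarith)) (by positivity))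
      (by positivity)
  linarith

theorem starForm_zero_le (hA : 0 ≤ A) (hX : X ^ 2 ≤ A * S) :
    starForm A 0 X S ≤ -(3 * S / (A + 1)) := by
  have : starForm A 0 X S = (X ^ 2 - A * S) / (A + 1) - 3 * S / (A + 1) := by
    unfold starForm
    field_simp
    ring
  rw [this]
  have : (X ^ 2 - A * S) / (A + 1) ≤ 0 := div_nonpos_of_nonpos_of_nonneg (by linarith) (by linarith)
  linarith

theorem starForm_three_self (hA : 0 ≤ A) : starForm A 3 A A = 3 - 12 / (A + 1) := by
  unfold starForm
  field_simp
  ring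

end StarForm

theorem dotProduct_ricciMatrix_mulVec_eq_sum_starForm (w : (caterpillar 2 a).edgeSet → ℝ) :
    w ⬝ᵥ (ricciMatrix (caterpillar 2 a) *ᵥ w) = ∑ i, starForm (a i) (w spineEdge)
      (∑ k, w (leafEdge ⟨i, k⟩)) (∑ k, w (leafEdge ⟨i, k⟩) ^ 2) := by
  rw [dotProduct_ricciMatrix_mulVec, Fintype.sum_sum_type, Fintype.sum_sigma,
    ← Finset.sum_add_distrib]
  refine Finset.sum_congr rfl fun i _ => ?_
  simp only [sum_incident_inl, sum_incident_inr, ncard_neighborSet_inl, ncard_neighborSet_inr,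
    starForm, Nat.cast_add, Nat.cast_one, div_one, Finset.sum_sub_distrib, ← Finset.mul_sum]
  ring

theorem sq_sum_leafEdge_le (w : (caterpillar 2 a).edgeSet → ℝ) (i : Fin 2) :
    (∑ k, w (leafEdge ⟨i, k⟩)) ^ 2 ≤ (a i : ℝ) * ∑ k, w (leafEdge ⟨i, k⟩) ^ 2 := by
  simpa using sq_sum_le_card_mul_sum_sq (s := Finset.univ)
    (f := fun k : Fin (a i) => w (leafEdge ⟨i, k⟩))

theorem dotProduct_ricciMatrix_mulVec_le (ha : ∀ i, 0 < a i) (w : (caterpillar 2 a).edgeSet → ℝ) :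
    w ⬝ᵥ (ricciMatrix (caterpillar 2 a) *ᵥ w)
      ≤ w spineEdge ^ 2 * (2 - 4 * ∑ i, 1 / ((a i : ℝ) + 1)) / 3 := by
  rw [dotProduct_ricciMatrix_mulVec_eq_sum_starForm]
  calc _ ≤ ∑ i, w spineEdge ^ 2 * ((a i : ℝ) - 3) / (3 * ((a i : ℝ) + 1)) :=
        Finset.sum_le_sum fun i _ => starForm_le (by exact_mod_cast ha i) (sq_sum_leafEdge_le w i)
    _ = _ := by
        simp only [Fin.sum_univ_two]
        field_simp
        ring

theorem dotProduct_ricciMatrix_mulVec_le_of_spine_eq_zero (w : (caterpillar 2 a).edgeSet → ℝ)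
    (hs : w spineEdge = 0) : w ⬝ᵥ (ricciMatrix (caterpillar 2 a) *ᵥ w)
      ≤ -∑ i, 3 * (∑ k, w (leafEdge ⟨i, k⟩) ^ 2) / ((a i : ℝ) + 1) := by
  rw [dotProduct_ricciMatrix_mulVec_eq_sum_starForm, hs, ← Finset.sum_neg_distrib]
  exact Finset.sum_le_sum fun i _ => starForm_zero_le (Nat.cast_nonneg _) (sq_sum_leafEdge_le w i)

theorem dotProduct_ricciMatrix_mulVec_neg (ha : ∀ i, 0 < a i)
    (hc : 1 / 2 < ∑ i, 1 / ((a i : ℝ) + 1)) {w : (caterpillar 2 a).edgeSet → ℝ} (hw : w ≠ 0) :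
    w ⬝ᵥ (ricciMatrix (caterpillar 2 a) *ᵥ w) < 0 := by
  by_cases hs : w spineEdge = 0
  · obtain ⟨e, he⟩ := Function.ne_iff.mp hw
    obtain ⟨t, rfl⟩ : ∃ t, e = leafEdge t :=
      (edge_eq_spineEdge_or_leafEdge e).resolve_left (by rintro rfl; exact he hs)
    have hleaves : 0 < ∑ k, w (leafEdge ⟨t.1, k⟩) ^ 2 :=
      Finset.sum_pos' (fun _ _ => sq_nonneg _) ⟨t.2, Finset.mem_univ _, sq_pos_of_ne_zero he⟩
    refine (dotProduct_ricciMatrix_mulVec_le_of_spine_eq_zero w hs).trans_lt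
      (neg_neg_of_pos (Finset.sum_pos' (fun i _ => by positivity) ⟨t.1, Finset.mem_univ _, ?_⟩))
    exact div_pos (mul_pos three_pos hleaves) (by positivity)
  · refine (dotProduct_ricciMatrix_mulVec_le ha w).trans_lt ?_
    have : 0 < w spineEdge ^ 2 := by positivity
    nlinarith

theorem dotProduct_ricciMatrix_mulVec_nonpos (ha : ∀ i, 0 < a i)
    (hc : 1 / 2 ≤ ∑ i, 1 / ((a i : ℝ) + 1)) (w : (caterpillar 2 a).edgeSet → ℝ) :
    w ⬝ᵥ (ricciMatrix (caterpillar 2 a) *ᵥ w) ≤ 0 :=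
  (dotProduct_ricciMatrix_mulVec_le ha w).trans <| div_nonpos_of_nonpos_of_nonneg
    (mul_nonpos_of_nonneg_of_nonpos (sq_nonneg _) (by linarith)) (by norm_num)

-- Equality case of `starForm_le` on both sides (`X = A s / 3` with all leaf weights equal).
noncomputable def testVector : (caterpillar 2 a).edgeSet → ℝ :=
  fun e => if e = spineEdge then 3 else 1

theorem testVector_ne_zero : (testVector : (caterpillar 2 a).edgeSet → ℝ) ≠ 0 :=
  fun h => by simpa [testVector] using congrFun h spineEdge

theorem dotProduct_ricciMatrix_mulVec_testVector :
    testVector ⬝ᵥ (ricciMatrix (caterpillar 2 a) *ᵥ testVector)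
      = 6 - 12 * ∑ i, 1 / ((a i : ℝ) + 1) := by
  have hleaf (t : Σ i, Fin (a i)) : testVector (leafEdge t) = 1 :=
    if_neg (by simp [spineEdge, leafEdge, Subtype.ext_iff])
  have hspine : testVector (a := a) spineEdge = 3 := if_pos rfl
  simp only [dotProduct_ricciMatrix_mulVec_eq_sum_starForm, hspine, hleaf, one_pow,
    Finset.sum_const, Finset.card_univ, Fintype.card_fin, nsmul_eq_mul, mul_one,
    starForm_three_self (Nat.cast_nonneg _), Fin.sum_univ_two]
  ring

instance : Nonempty (caterpillar 2 a).edgeSet := ⟨spineEdge⟩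

theorem lambdaMax_neg_iff (ha : ∀ i, 0 < a i) :
    lambdaMax (ricciMatrix (caterpillar 2 a)) < 0 ↔ 1 / 2 < ∑ i, 1 / ((a i : ℝ) + 1) := by
  rw [(isHermitian_ricciMatrix _).lambdaMax_neg_iff]
  refine ⟨fun h => ?_, fun hc _ => dotProduct_ricciMatrix_mulVec_neg ha hc⟩
  have := h testVector testVector_ne_zero
  rw [dotProduct_ricciMatrix_mulVec_testVector] at this
  linarith

theorem lambdaMax_nonpos_iff (ha : ∀ i, 0 < a i) :
    lambdaMax (ricciMatrix (caterpillar 2 a)) ≤ 0 ↔ 1 / 2 ≤ ∑ i, 1 / ((a i : ℝ) + 1) := by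
  rw [(isHermitian_ricciMatrix _).lambdaMax_nonpos_iff]
  refine ⟨fun h => ?_, dotProduct_ricciMatrix_mulVec_nonpos ha⟩
  have := h testVector
  rw [dotProduct_ricciMatrix_mulVec_testVector] at this
  linarith

end doubleStar

theorem one_div_add_one_div_sub_half {a b : ℕ} (ha : 1 ≤ a) (hb : 1 ≤ b) :
    1 / ((a : ℝ) + 1) + 1 / ((b : ℝ) + 1) - 1 / 2
      = (4 - ((a - 1) * (b - 1) : ℕ)) / (2 * ((a : ℝ) + 1) * ((b : ℝ) + 1)) := by
  push_cast [Nat.cast_sub ha, Nat.cast_sub hb]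
  field_simp
  ring

theorem half_lt_one_div_add_one_div_iff {a b : ℕ} (ha : 1 ≤ a) (hb : 1 ≤ b) :
    1 / 2 < 1 / ((a : ℝ) + 1) + 1 / ((b : ℝ) + 1) ↔ (a - 1) * (b - 1) < 4 := by
  rw [← sub_pos, one_div_add_one_div_sub_half ha hb, lt_div_iff₀ (by positivity), zero_mul,
    sub_pos]
  norm_cast

theorem half_le_one_div_add_one_div_iff {a b : ℕ} (ha : 1 ≤ a) (hb : 1 ≤ b) :
    1 / 2 ≤ 1 / ((a : ℝ) + 1) + 1 / ((b : ℝ) + 1) ↔ (a - 1) * (b - 1) ≤ 4 := by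
  rw [← sub_nonneg, one_div_add_one_div_sub_half ha hb, le_div_iff₀ (by positivity), zero_mul,
    sub_nonneg]
  norm_cast

/-- **Double stars.**  For `a, b ≥ 1`, the double star `T_2(a,b)` has
`λ_max < 0` iff `(a−1)(b−1) < 4` and `λ_max = 0` iff `(a−1)(b−1) = 4`. -/
theorem doubleStar_lambdaMax (a b : ℕ) (ha : 1 ≤ a) (hb : 1 ≤ b) :
    (lambdaMax (ricciMatrix (caterpillar 2 ![a, b])) < 0 ↔ (a - 1) * (b - 1) < 4) ∧
    (lambdaMax (ricciMatrix (caterpillar 2 ![a, b])) = 0 ↔ (a - 1) * (b - 1) = 4) := by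
  have hpos : ∀ i, 0 < ![a, b] i := Fin.forall_fin_two.2 ⟨ha, hb⟩
  have hsum : ∑ i, 1 / ((![a, b] i : ℝ) + 1) = 1 / ((a : ℝ) + 1) + 1 / ((b : ℝ) + 1) := by
    simp [Fin.sum_univ_two]
  have hneg : lambdaMax (ricciMatrix (caterpillar 2 ![a, b])) < 0 ↔ (a - 1) * (b - 1) < 4 := by
    rw [doubleStar.lambdaMax_neg_iff hpos, hsum, half_lt_one_div_add_one_div_iff ha hb]
  have hnonpos : lambdaMax (ricciMatrix (caterpillar 2 ![a, b])) ≤ 0 ↔ (a - 1) * (b - 1) ≤ 4 := by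
    rw [doubleStar.lambdaMax_nonpos_iff hpos, hsum, half_le_one_div_add_one_div_iff ha hb]
  rw [eq_iff_le_not_lt, hnonpos, hneg]
  exact ⟨Iff.rfl, by omega⟩
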